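/- arXiv:0908.3381 — 5 statements merged into one kernel-verified Lean document; each statement's English description precedes it below -/
import Mathlib

section
/- Define the infinite matrix R(z) by R(z)_{j,k} = r_j^R(z) q_k^L(z) for j ≥ k and R(z)_{j,k} = q_j^R(z) r_k^L(z) for j ≤ k, where r_n^L, r_n^R are the scaled linearized errors associated with an arbitrary φ(z) ∈ ℂ. Then R(z)(zB − A) and (zB − A)R(z) are both (formally, entrywise) equal to the identity matrix. -/
/-!
Write `M = zB − A`. The recurrences say that `qᴸ M = 0` and `pᴸ M = −e₀` as row vectors and that
`M qᴿ = 0` and `M pᴿ = −e₀` as column vectors, so `rᴸ M = e₀` and `M rᴿ = e₀`. Column `k` of `R` is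
`rᴸ k • qᴿ` above the diagonal and `qᴸ k • rᴿ` from the diagonal down, so `M R = 1` reduces, at the
two rows where the branches meet, to the Wronskian identity
`αᴸ n * (qᴿ n * pᴸ (n + 1) - pᴿ n * qᴸ (n + 1)) = 1` and to `qᴿ n * pᴸ n = pᴿ n * qᴸ n`.
Both follow from `(∏ i < n, αᴸ i) * qᴸ n = (∏ i < n, αᴿ i) * qᴿ n` (and the same for `p`): the two
sides satisfy one symmetric three-term recurrence, whose Casoratian is `∏ i < n, αᴸ i * αᴿ i`,
which also shows that no `αᴸ n` or `αᴿ n` vanishes. Finally `R M = 1` is `M R = 1` for the transposed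
pencil, which exchanges the roles of `L` and `R`.
-/

/-- The entries of the infinite tridiagonal pencil `z B - A`. -/
noncomputable def pencilEntry (b l r : ℕ → ℂ) : ℕ → ℕ → ℂ := fun j k =>
  if j = k then b j
  else if j = k + 1 then -(l k)
  else if k = j + 1 then -(r j)
  else 0

open Finset

section Pencil

variable (b l r : ℕ → ℂ)

theorem pencilEntry_transpose (j k : ℕ) : pencilEntry b r l k j = pencilEntry b l r j k := by
  unfold pencilEntry
  by_cases hjk : j = k
  · simp [hjk]
  · simp only [hjk, Ne.symm hjk, if_false]
    split_ifs <;> first | rfl | omega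

theorem tsum_pencilEntry_zero_mul (x : ℕ → ℂ) :
    ∑' i, pencilEntry b l r 0 i * x i = b 0 * x 0 - r 0 * x 1 := by
  rw [tsum_eq_sum (s := {0, 1}) fun i hi => by
    simp only [mem_insert, mem_singleton, not_or] at hi
    simp only [pencilEntry]
    split_ifs <;> first | contradiction | omega | simp]
  simp [pencilEntry]
  ring

theorem tsum_pencilEntry_succ_mul (j : ℕ) (x : ℕ → ℂ) :
    ∑' i, pencilEntry b l r (j + 1) i * x i =
      b (j + 1) * x (j + 1) - l j * x j - r (j + 1) * x (j + 2) := by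
  rw [tsum_eq_sum (s := {j, j + 1, j + 2}) fun i hi => by
    simp only [mem_insert, mem_singleton, not_or] at hi
    simp only [pencilEntry]
    split_ifs <;> first | contradiction | omega | simp]
  simp [pencilEntry]
  ring

end Pencil

-- `SatisfiesRecurrence b l r y c` says that the row vector `y` satisfies
-- `y * pencilEntry b l r = c • e₀`; equivalently `pencilEntry b r l * y = c • e₀`.
def SatisfiesRecurrence (b l r y : ℕ → ℂ) (c : ℂ) : Prop :=
  l 0 * y 1 - b 0 * y 0 + c = 0 ∧
    ∀ n, l (n + 1) * y (n + 2) - b (n + 1) * y (n + 1) + r n * y n = 0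

namespace SatisfiesRecurrence

variable {b l r y y' : ℕ → ℂ} {c c' : ℂ}

theorem mul_sub (hy : SatisfiesRecurrence b l r y c) (hy' : SatisfiesRecurrence b l r y' c')
    (φ : ℂ) : SatisfiesRecurrence b l r (fun n => y n * φ - y' n) (c * φ - c') :=
  ⟨by linear_combination φ * hy.1 - hy'.1,
    fun n => by linear_combination φ * hy.2 n - hy'.2 n⟩

theorem prod_range_mul_add_two (hy : SatisfiesRecurrence b l r y c) (n : ℕ) :
    (∏ i ∈ range (n + 2), l i) * y (n + 2) =
      b (n + 1) * ((∏ i ∈ range (n + 1), l i) * y (n + 1)) -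
        l n * r n * ((∏ i ∈ range n, l i) * y n) := by
  rw [prod_range_succ, prod_range_succ]
  linear_combination (∏ i ∈ range n, l i) * l n * hy.2 n

theorem prod_range_mul_eq (hy : SatisfiesRecurrence b l r y c)
    (hy' : SatisfiesRecurrence b r l y' c) (h0 : y 0 = y' 0) (n : ℕ) :
    (∏ i ∈ range n, l i) * y n = (∏ i ∈ range n, r i) * y' n := by
  induction n using Nat.twoStepInduction with
  | zero => simpa using h0
  | one => simp only [range_one, prod_singleton]; linear_combination hy.1 - hy'.1 + b 0 * h0
  | more n ih₀ ih₁ =>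
    rw [hy.prod_range_mul_add_two, hy'.prod_range_mul_add_two, ih₀, ih₁]
    ring

end SatisfiesRecurrence

theorem casoratian_eq_prod_mul (a c D N : ℕ → ℂ)
    (hD : ∀ n, D (n + 2) = a (n + 1) * D (n + 1) - c n * D n)
    (hN : ∀ n, N (n + 2) = a (n + 1) * N (n + 1) - c n * N n) (n : ℕ) :
    D n * N (n + 1) - N n * D (n + 1) = (∏ i ∈ range n, c i) * (D 0 * N 1 - N 0 * D 1) := by
  induction n with
  | zero => simp
  | succ n ih =>
    rw [prod_range_succ, hD, hN]
    linear_combination c n * ih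

structure ScaledConvergents (b l r qL pL qR pR : ℕ → ℂ) : Prop where
  qL_zero : qL 0 = 1
  pL_zero : pL 0 = 0
  qR_zero : qR 0 = 1
  pR_zero : pR 0 = 0
  qL_rec : SatisfiesRecurrence b l r qL 0
  pL_rec : SatisfiesRecurrence b l r pL (-1)
  qR_rec : SatisfiesRecurrence b r l qR 0
  pR_rec : SatisfiesRecurrence b r l pR (-1)

namespace ScaledConvergents

variable {b l r qL pL qR pR : ℕ → ℂ}

theorem swap (h : ScaledConvergents b l r qL pL qR pR) : ScaledConvergents b r l qR pR qL pL :=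
  ⟨h.qR_zero, h.pR_zero, h.qL_zero, h.pL_zero, h.qR_rec, h.pR_rec, h.qL_rec, h.pL_rec⟩

theorem casoratian (h : ScaledConvergents b l r qL pL qR pR) (n : ℕ) :
    (∏ i ∈ range n, l i) * qL n * ((∏ i ∈ range (n + 1), l i) * pL (n + 1)) -
        (∏ i ∈ range n, l i) * pL n * ((∏ i ∈ range (n + 1), l i) * qL (n + 1)) =
      (∏ i ∈ range n, l i) * ∏ i ∈ range n, r i := by
  have hC := casoratian_eq_prod_mul b (fun n => l n * r n)
    (fun n => (∏ i ∈ range n, l i) * qL n) (fun n => (∏ i ∈ range n, l i) * pL n)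
    h.qL_rec.prod_range_mul_add_two h.pL_rec.prod_range_mul_add_two n
  rw [hC, ← prod_mul_distrib]
  simp only [range_zero, range_one, prod_empty, prod_singleton, h.qL_zero, h.pL_zero]
  linear_combination (∏ i ∈ range n, l i * r i) * (h.pL_rec.1 + b 0 * h.pL_zero)

theorem prod_mul_qL (h : ScaledConvergents b l r qL pL qR pR) (n : ℕ) :
    (∏ i ∈ range n, l i) * qL n = (∏ i ∈ range n, r i) * qR n :=
  h.qL_rec.prod_range_mul_eq h.qR_rec (h.qL_zero.trans h.qR_zero.symm) n

theorem prod_mul_pL (h : ScaledConvergents b l r qL pL qR pR) (n : ℕ) :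
    (∏ i ∈ range n, l i) * pL n = (∏ i ∈ range n, r i) * pR n :=
  h.pL_rec.prod_range_mul_eq h.pR_rec (h.pL_zero.trans h.pR_zero.symm) n

theorem offDiag_ne_zero (h : ScaledConvergents b l r qL pL qR pR) (n : ℕ) : l n ≠ 0 ∧ r n ≠ 0 := by
  induction n using Nat.strong_induction_on with
  | _ n ih =>
    have hprod : (∏ i ∈ range n, l i) * ∏ i ∈ range n, r i ≠ 0 :=
      mul_ne_zero (prod_ne_zero_iff.2 fun i hi => (ih i (mem_range.1 hi)).1)
        (prod_ne_zero_iff.2 fun i hi => (ih i (mem_range.1 hi)).2)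
    refine ⟨fun hl => hprod ?_, fun hr => hprod ?_⟩
    · rw [← h.casoratian n, prod_range_succ, hl]
      ring
    · rw [mul_comm, ← h.swap.casoratian n, prod_range_succ, hr]
      ring

theorem prod_mul_prod_ne_zero (h : ScaledConvergents b l r qL pL qR pR) (n : ℕ) :
    (∏ i ∈ range n, l i) * ∏ i ∈ range n, r i ≠ 0 :=
  mul_ne_zero (prod_ne_zero_iff.2 fun i _ => (h.offDiag_ne_zero i).1)
    (prod_ne_zero_iff.2 fun i _ => (h.offDiag_ne_zero i).2)

theorem wronskian (h : ScaledConvergents b l r qL pL qR pR) (n : ℕ) :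
    l n * (qR n * pL (n + 1) - pR n * qL (n + 1)) = 1 := by
  have hC := h.casoratian n
  rw [h.prod_mul_qL n, h.prod_mul_pL n, prod_range_succ] at hC
  apply mul_left_cancel₀ (h.prod_mul_prod_ne_zero n)
  linear_combination hC

theorem qR_mul_pL (h : ScaledConvergents b l r qL pL qR pR) (n : ℕ) :
    qR n * pL n = pR n * qL n := by
  apply mul_left_cancel₀ (h.prod_mul_prod_ne_zero n)
  linear_combination (∏ i ∈ range n, l i) * qL n * h.prod_mul_pL n -
    (∏ i ∈ range n, l i) * pL n * h.prod_mul_qL n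

end ScaledConvergents

-- The diagonal is taken from the first branch; `ScaledConvergents.qR_mul_pL` shows that the
-- second branch agrees with it there.
def greenMatrix (qL qR rL rR : ℕ → ℂ) (j k : ℕ) : ℂ :=
  if k ≤ j then rR j * qL k else qR j * rL k

theorem greenMatrix_swap {qL qR rL rR : ℕ → ℂ} (hdiag : ∀ n, qR n * rL n = rR n * qL n)
    (i j : ℕ) : greenMatrix qR qL rR rL i j = greenMatrix qL qR rL rR j i := by
  unfold greenMatrix
  rcases lt_trichotomy i j with hij | rfl | hij
  · simp [hij.not_ge, hij.le, mul_comm]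
  · simpa [mul_comm] using hdiag i
  · simp [hij.not_ge, hij.le, mul_comm]

theorem tsum_pencilEntry_mul_greenMatrix {b l r qL qR rL rR : ℕ → ℂ}
    (hqR : SatisfiesRecurrence b r l qR 0) (hrR : SatisfiesRecurrence b r l rR 1)
    (hqL : qL 0 = 1) (hW : ∀ n, l n * (rR n * qL (n + 1) - qR n * rL (n + 1)) = 1)
    (hdiag : ∀ n, qR n * rL n = rR n * qL n) (j k : ℕ) :
    ∑' i, pencilEntry b l r j i * greenMatrix qL qR rL rR i k = if j = k then 1 else 0 := by
  rcases j with _ | j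
  · rw [tsum_pencilEntry_zero_mul]
    rcases k with _ | _ | k
    · simp (disch := omega) only [greenMatrix, if_pos, ↓reduceIte]
      linear_combination -qL 0 * hrR.1 + hqL
    · simp (disch := omega) only [greenMatrix, if_pos, if_neg]
      linear_combination -rL 1 * hqR.1 + r 0 * hdiag 1
    · simp (disch := omega) only [greenMatrix, if_neg]
      linear_combination -rL (k + 2) * hqR.1
  · rw [tsum_pencilEntry_succ_mul]
    obtain hk | rfl | rfl | hk : k ≤ j ∨ k = j + 1 ∨ k = j + 2 ∨ j + 3 ≤ k := by omega
    · simp (disch := omega) only [greenMatrix, if_pos, if_neg]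
      linear_combination -qL k * hrR.2 j
    · simp (disch := omega) only [greenMatrix, if_pos, if_neg, ↓reduceIte]
      linear_combination -qL (j + 1) * hrR.2 j + hW j
    · simp (disch := omega) only [greenMatrix, if_pos, if_neg]
      linear_combination -rL (j + 2) * hqR.2 j + r (j + 1) * hdiag (j + 2)
    · simp (disch := omega) only [greenMatrix, if_neg]
      linear_combination -rL k * hqR.2 j

namespace ScaledConvergents

variable {b l r qL pL qR pR rL rR : ℕ → ℂ} {φ : ℂ}

theorem tsum_pencilEntry_mul_greenMatrix (h : ScaledConvergents b l r qL pL qR pR)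
    (hrL : ∀ n, rL n = qL n * φ - pL n) (hrR : ∀ n, rR n = qR n * φ - pR n) (j k : ℕ) :
    ∑' i, pencilEntry b l r j i * greenMatrix qL qR rL rR i k = if j = k then 1 else 0 := by
  obtain rfl : rL = _ := funext hrL
  obtain rfl : rR = _ := funext hrR
  refine _root_.tsum_pencilEntry_mul_greenMatrix h.qR_rec ?_ h.qL_zero (fun n => ?_) (fun n => ?_) j k
  · simpa using h.qR_rec.mul_sub h.pR_rec φ
  · linear_combination h.wronskian n
  · linear_combination -h.qR_mul_pL n

theorem tsum_greenMatrix_mul_pencilEntry (h : ScaledConvergents b l r qL pL qR pR)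
    (hrL : ∀ n, rL n = qL n * φ - pL n) (hrR : ∀ n, rR n = qR n * φ - pR n) (j k : ℕ) :
    ∑' i, greenMatrix qL qR rL rR j i * pencilEntry b l r i k = if j = k then 1 else 0 := by
  have hdiag (n : ℕ) : qR n * rL n = rR n * qL n := by
    rw [hrL, hrR]
    linear_combination -h.qR_mul_pL n
  calc ∑' i, greenMatrix qL qR rL rR j i * pencilEntry b l r i k
      = ∑' i, pencilEntry b r l k i * greenMatrix qR qL rR rL i j :=
        tsum_congr fun i => by rw [pencilEntry_transpose, greenMatrix_swap hdiag, mul_comm]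
    _ = if j = k then 1 else 0 := by
        rw [h.swap.tsum_pencilEntry_mul_greenMatrix hrR hrL k j]
        simp only [@eq_comm _ k j]

end ScaledConvergents

theorem stmt_8_general (β αL αR : ℕ → Polynomial ℂ)
    (z φ : ℂ) (qL pL qR pR : ℕ → ℂ)
    (hqL0 : qL 0 = 1)
    (hqL1 : (αL 0).eval z * qL 1 - (β 0).eval z * qL 0 = 0)
    (hqLrec : ∀ n, (αL (n + 1)).eval z * qL (n + 2) - (β (n + 1)).eval z * qL (n + 1) +
      (αR n).eval z * qL n = 0)
    (hpL0 : pL 0 = 0)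
    (hpL1 : (αL 0).eval z * pL 1 - (β 0).eval z * pL 0 + 1 * (-1) = 0)
    (hpLrec : ∀ n, (αL (n + 1)).eval z * pL (n + 2) - (β (n + 1)).eval z * pL (n + 1) +
      (αR n).eval z * pL n = 0)
    (hqR0 : qR 0 = 1)
    (hqR1 : (αR 0).eval z * qR 1 - (β 0).eval z * qR 0 = 0)
    (hqRrec : ∀ n, (αR (n + 1)).eval z * qR (n + 2) - (β (n + 1)).eval z * qR (n + 1) +
      (αL n).eval z * qR n = 0)
    (hpR0 : pR 0 = 0)
    (hpR1 : (αR 0).eval z * pR 1 - (β 0).eval z * pR 0 + 1 * (-1) = 0)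
    (hpRrec : ∀ n, (αR (n + 1)).eval z * pR (n + 2) - (β (n + 1)).eval z * pR (n + 1) +
      (αL n).eval z * pR n = 0)
    (rL rR : ℕ → ℂ)
    (hrL : ∀ n, rL n = qL n * φ - pL n)
    (hrR : ∀ n, rR n = qR n * φ - pR n)
    (R : ℕ → ℕ → ℂ)
    (hR : ∀ j k, R j k = if k ≤ j then rR j * qL k else qR j * rL k) :
    ∀ j k : ℕ,
      (∑' i : ℕ, R j i *
          pencilEntry (fun n => (β n).eval z) (fun n => (αL n).eval z)
            (fun n => (αR n).eval z) i k) = (if j = k then 1 else 0) ∧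
      (∑' i : ℕ,
          pencilEntry (fun n => (β n).eval z) (fun n => (αL n).eval z)
            (fun n => (αR n).eval z) j i * R i k) = (if j = k then 1 else 0) := by
  have h : ScaledConvergents (fun n => (β n).eval z) (fun n => (αL n).eval z)
      (fun n => (αR n).eval z) qL pL qR pR :=
    ⟨hqL0, hpL0, hqR0, hpR0, ⟨by linear_combination hqL1, hqLrec⟩,
      ⟨by linear_combination hpL1, hpLrec⟩, ⟨by linear_combination hqR1, hqRrec⟩,
      ⟨by linear_combination hpR1, hpRrec⟩⟩
  obtain rfl : R = greenMatrix qL qR rL rR := funext₂ hR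
  exact fun j k => ⟨h.tsum_greenMatrix_mul_pencilEntry hrL hrR j k,
    h.tsum_pencilEntry_mul_greenMatrix hrL hrR j k⟩

/-- Define the infinite matrix `R z` by `R j k = rᴿ j * qᴸ k` for `j ≥ k` and
`R j k = qᴿ j * rᴸ k` for `j ≤ k`, where `rᴸ n = qᴸ n * φ - pᴸ n`,
`rᴿ n = qᴿ n * φ - pᴿ n` are the scaled linearized errors associated with an arbitrary
`φ ∈ ℂ`.  Then `R (z B - A)` and `(z B - A) R` are both, entrywise (each entry of the
formal product being a finite sum since the pencil is tridiagonal), equal to the identity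
matrix. -/
theorem stmt_8 (β αL αR : ℕ → Polynomial ℂ)
    (hβ : ∀ n, (β n).degree ≤ 1) (hαL : ∀ n, (αL n).degree ≤ 1)
    (hαR : ∀ n, (αR n).degree ≤ 1)
    (z φ : ℂ) (qL pL qR pR : ℕ → ℂ)
    (hqL0 : qL 0 = 1)
    (hqL1 : (αL 0).eval z * qL 1 - (β 0).eval z * qL 0 = 0)
    (hqLrec : ∀ n, (αL (n + 1)).eval z * qL (n + 2) - (β (n + 1)).eval z * qL (n + 1) +
      (αR n).eval z * qL n = 0)
    (hpL0 : pL 0 = 0)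
    (hpL1 : (αL 0).eval z * pL 1 - (β 0).eval z * pL 0 + 1 * (-1) = 0)
    (hpLrec : ∀ n, (αL (n + 1)).eval z * pL (n + 2) - (β (n + 1)).eval z * pL (n + 1) +
      (αR n).eval z * pL n = 0)
    (hqR0 : qR 0 = 1)
    (hqR1 : (αR 0).eval z * qR 1 - (β 0).eval z * qR 0 = 0)
    (hqRrec : ∀ n, (αR (n + 1)).eval z * qR (n + 2) - (β (n + 1)).eval z * qR (n + 1) +
      (αL n).eval z * qR n = 0)
    (hpR0 : pR 0 = 0)
    (hpR1 : (αR 0).eval z * pR 1 - (β 0).eval z * pR 0 + 1 * (-1) = 0)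
    (hpRrec : ∀ n, (αR (n + 1)).eval z * pR (n + 2) - (β (n + 1)).eval z * pR (n + 1) +
      (αL n).eval z * pR n = 0)
    (rL rR : ℕ → ℂ)
    (hrL : ∀ n, rL n = qL n * φ - pL n)
    (hrR : ∀ n, rR n = qR n * φ - pR n)
    (R : ℕ → ℕ → ℂ)
    (hR : ∀ j k, R j k = if k ≤ j then rR j * qL k else qR j * rL k) :
    ∀ j k : ℕ,
      (∑' i : ℕ, R j i *
          pencilEntry (fun n => (β n).eval z) (fun n => (αL n).eval z)
            (fun n => (αR n).eval z) i k) = (if j = k then 1 else 0) ∧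
      (∑' i : ℕ,
          pencilEntry (fun n => (β n).eval z) (fun n => (αL n).eval z)
            (fun n => (αR n).eval z) j i * R i k) = (if j = k then 1 else 0) :=
  stmt_8_general β αL αR z φ qL pL qR pR hqL0 hqL1 hqLrec hpL0 hpL1 hpLrec hqR0 hqR1 hqRrec hpR0
    hpR1 hpRrec rL rR hrL hrR R hR
end

section
/- Assume 0 ∉ closure(Θ(B)) for bounded operators A, B on ℓ². Then for each z with dist(z, W(A,B)) > 0, the operator zB − A is boundedly invertible with ‖(zB−A)^{-1}‖ ≤ 1/(d · dist(z, W(A,B))), and the truncated resolvents converge strongly: for every η ∈ ℓ², (zB_{[0:n]} − A_{[0:n]})^{-1}η → (zB − A)^{-1}η as n → ∞ (finite sections regarded as operators on ℓ² in the natural way). -/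
/-!
For a unit vector `g` with `b = ⟪B g, g⟫ ≠ 0`, the point `w = conj (⟪A g, g⟫ / b)` lies in
`W(A,B)` and `⟪(zB - A) g, g⟫ = conj (z - w) * b`, so
`‖⟪(zB - A) f, f⟫‖ ≥ d · dist(z, W(A,B)) · ‖f‖²`: the pencil is coercive, hence invertible with
inverse of norm at most the reciprocal constant. Coercivity passes to the compression onto
`span {e₀, …, eₙ}`, so every finite section is invertible with the same bound; the truncated
resolvents are Galerkin approximations, uniformly Lipschitz, and they recover `ψ` from
`(zB - A) ψ` once `ψ ∈ span {e₀, …, eₙ}`. They therefore converge on the dense set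
`(zB - A)(finitely supported vectors)`, hence everywhere by equicontinuity.
-/

noncomputable section

open Filter Matrix

/-- The underlying Hilbert space `ℓ²(ℕ)`. -/
abbrev ellTwo : Type := lp (fun _ : ℕ => ℂ) 2

/-- The standard basis vectors of `ℓ²`. -/
def stdBasis (j : ℕ) : ellTwo := lp.single 2 j 1

/-- The numerical range `W(A,B)` of the linear pencil `z B - A`. -/
def numericalRange (A B : ellTwo →L[ℂ] ellTwo) : Set ℂ :=
  {z : ℂ | ∃ y : ellTwo, y ≠ 0 ∧ (inner ℂ ((z • B - A) y) y : ℂ) = 0}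

/-- The finite section `z B_{[0:n]} - A_{[0:n]}` as an `(n+1) × (n+1)` matrix. -/
def finiteSection (A B : ellTwo →L[ℂ] ellTwo) (z : ℂ) (n : ℕ) :
    Matrix (Fin (n + 1)) (Fin (n + 1)) ℂ :=
  Matrix.of fun i j =>
    z * (inner ℂ (stdBasis (i : ℕ)) (B (stdBasis (j : ℕ))) : ℂ) -
      (inner ℂ (stdBasis (i : ℕ)) (A (stdBasis (j : ℕ))) : ℂ)

open scoped InnerProductSpace NNReal Topology ComplexConjugate

section Coercive

variable {𝕜 E : Type*} [RCLike 𝕜] [NormedAddCommGroup E] [InnerProductSpace 𝕜 E]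

lemma norm_mul_le_norm_of_sq_mul_le_norm_inner {f g : E} {c : ℝ}
    (h : ‖f‖ ^ 2 * c ≤ ‖⟪g, f⟫_𝕜‖) : ‖f‖ * c ≤ ‖g‖ := by
  rcases eq_or_ne f 0 with rfl | hf
  · simp
  · have hf' : 0 < ‖f‖ := norm_pos_iff.2 hf
    have := h.trans (norm_inner_le_norm g f)
    nlinarith

lemma sq_norm_mul_le_norm_inner_of_forall_norm_eq_one (T : E →L[𝕜] E) {c : ℝ}
    (hT : ∀ g, ‖g‖ = 1 → c ≤ ‖⟪T g, g⟫_𝕜‖) (f : E) : ‖f‖ ^ 2 * c ≤ ‖⟪T f, f⟫_𝕜‖ := by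
  rcases eq_or_ne f 0 with rfl | hf
  · simp
  · set g : E := (‖f‖⁻¹ : 𝕜) • f
    have hfg : f = (‖f‖ : 𝕜) • g := by
      rw [smul_smul, mul_inv_cancel₀ (by simpa using hf), one_smul]
    have : ‖⟪T f, f⟫_𝕜‖ = ‖f‖ ^ 2 * ‖⟪T g, g⟫_𝕜‖ := by
      conv_lhs => rw [hfg]
      simp [inner_smul_left, inner_smul_right, sq, mul_assoc]
    rw [this]
    exact mul_le_mul_of_nonneg_left (hT g (norm_smul_inv_norm hf)) (by positivity)

lemma exists_inverse_of_coercive [CompleteSpace E] (T : E →L[𝕜] E) {c : ℝ} (hc : 0 < c)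
    (hT : ∀ f, ‖f‖ ^ 2 * c ≤ ‖⟪T f, f⟫_𝕜‖) :
    ∃ R : E →L[𝕜] E, (∀ x, R (T x) = x) ∧ (∀ x, T (R x) = x) ∧ ‖R‖ ≤ c⁻¹ := by
  lift c to ℝ≥0 using hc.le
  replace hc : 0 < c := NNReal.coe_pos.1 hc
  obtain ⟨U, rfl⟩ := ContinuousLinearMap.isUnit_of_forall_le_norm_inner_map T hc hT
  have hRT (x : E) : (↑U⁻¹ : E →L[𝕜] E) ((U : E →L[𝕜] E) x) = x := congr($(U.inv_mul) x)
  have hTR (x : E) : (U : E →L[𝕜] E) ((↑U⁻¹ : E →L[𝕜] E) x) = x := congr($(U.mul_inv) x)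
  refine ⟨↑U⁻¹, hRT, hTR, ContinuousLinearMap.opNorm_le_bound _ (by positivity) fun y => ?_⟩
  simpa [hTR] using (U : E →L[𝕜] E).bound_of_antilipschitz
    (ContinuousLinearMap.antilipschitz_of_forall_le_inner_map _ hc hT) ((↑U⁻¹ : E →L[𝕜] E) y)

end Coercive

section Galerkin

variable {𝕜 E ι : Type*} [RCLike 𝕜] [NormedAddCommGroup E] [InnerProductSpace 𝕜 E] [Fintype ι]

lemma Orthonormal.norm_sum_inner_smul_le {v : ι → E} (hv : Orthonormal 𝕜 v) (η : E) :
    ‖∑ i, ⟪v i, η⟫_𝕜 • v i‖ ≤ ‖η‖ := by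
  set p := ∑ i, ⟪v i, η⟫_𝕜 • v i
  have hp : ⟪p, p⟫_𝕜 = ⟪p, η⟫_𝕜 := by
    rw [hv.inner_sum, sum_inner]
    simp only [inner_smul_left]
  refine (mul_one ‖p‖).symm.trans_le (norm_mul_le_norm_of_sq_mul_le_norm_inner (𝕜 := 𝕜) ?_)
  rw [mul_one, norm_inner_symm (𝕜 := 𝕜), ← hp, inner_self_eq_norm_sq_to_K]
  simp

def galerkinMatrix (T : E →L[𝕜] E) (v : ι → E) : Matrix ι ι 𝕜 :=
  Matrix.of fun i j => ⟪v i, T (v j)⟫_𝕜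

lemma galerkinMatrix_mulVec (T : E →L[𝕜] E) (v : ι → E) (x : ι → 𝕜) (i : ι) :
    (galerkinMatrix T v *ᵥ x) i = ⟪v i, T (∑ j, x j • v j)⟫_𝕜 := by
  simp [galerkinMatrix, Matrix.mulVec, dotProduct, inner_sum, inner_smul_right, mul_comm]

lemma norm_mul_le_norm_galerkinMatrix_mulVec {T : E →L[𝕜] E} {v : ι → E} (hv : Orthonormal 𝕜 v)
    {c : ℝ} (hT : ∀ f, ‖f‖ ^ 2 * c ≤ ‖⟪T f, f⟫_𝕜‖) (x : ι → 𝕜) :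
    ‖∑ i, x i • v i‖ * c ≤ ‖∑ i, (galerkinMatrix T v *ᵥ x) i • v i‖ := by
  have h : ⟪∑ i, x i • v i, ∑ i, (galerkinMatrix T v *ᵥ x) i • v i⟫_𝕜 =
      ⟪∑ i, x i • v i, T (∑ i, x i • v i)⟫_𝕜 := by
    rw [hv.inner_sum, sum_inner]
    simp only [galerkinMatrix_mulVec, inner_smul_left]
  refine norm_mul_le_norm_of_sq_mul_le_norm_inner (𝕜 := 𝕜) ((hT _).trans_eq ?_)
  rw [norm_inner_symm, ← h]
  exact norm_inner_symm _ _

variable [DecidableEq ι]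

def galerkinApprox (T : E →L[𝕜] E) (v : ι → E) (η : E) : E :=
  ∑ i, ((galerkinMatrix T v)⁻¹ *ᵥ fun j => ⟪v j, η⟫_𝕜) i • v i

lemma galerkinApprox_sub (T : E →L[𝕜] E) (v : ι → E) (η η' : E) :
    galerkinApprox T v (η - η') = galerkinApprox T v η - galerkinApprox T v η' := by
  simp only [galerkinApprox, inner_sub_right, ← Pi.sub_def, Matrix.mulVec_sub, Pi.sub_apply,
    sub_smul, Finset.sum_sub_distrib]

variable {T : E →L[𝕜] E} {v : ι → E} (hv : Orthonormal 𝕜 v) {c : ℝ} (hc : 0 < c)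
  (hT : ∀ f, ‖f‖ ^ 2 * c ≤ ‖⟪T f, f⟫_𝕜‖)
include hv hc hT

lemma isUnit_det_galerkinMatrix : IsUnit (galerkinMatrix T v).det := by
  rw [isUnit_iff_ne_zero, Ne, ← Matrix.exists_mulVec_eq_zero_iff]
  rintro ⟨x, hx, hMx⟩
  have h := norm_mul_le_norm_galerkinMatrix_mulVec hv hT x
  rw [hMx] at h
  simp only [Pi.zero_apply, zero_smul, Finset.sum_const_zero, norm_zero] at h
  have hsum : ∑ i, x i • v i = 0 := norm_le_zero_iff.1 (nonpos_of_mul_nonpos_left h hc)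
  exact hx (funext (Fintype.linearIndependent_iff.1 hv.linearIndependent x hsum))

lemma norm_galerkinApprox_le (η : E) : ‖galerkinApprox T v η‖ ≤ c⁻¹ * ‖η‖ := by
  have h := norm_mul_le_norm_galerkinMatrix_mulVec hv hT
    ((galerkinMatrix T v)⁻¹ *ᵥ fun j => ⟪v j, η⟫_𝕜)
  rw [Matrix.mulVec_mulVec, Matrix.mul_nonsing_inv _ (isUnit_det_galerkinMatrix hv hc hT),
    Matrix.one_mulVec] at h
  rw [inv_mul_eq_div, le_div_iff₀ hc]
  exact h.trans (hv.norm_sum_inner_smul_le η)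

lemma galerkinApprox_apply_of_mem_span {ψ : E} (hψ : ψ ∈ Submodule.span 𝕜 (Set.range v)) :
    galerkinApprox T v (T ψ) = ψ := by
  obtain ⟨x, rfl⟩ := (Submodule.mem_span_range_iff_exists_fun 𝕜).1 hψ
  simp only [galerkinApprox, ← galerkinMatrix_mulVec, Matrix.mulVec_mulVec,
    Matrix.nonsing_inv_mul _ (isUnit_det_galerkinMatrix hv hc hT), Matrix.one_mulVec]

end Galerkin

section StrongConvergence

variable {𝕜 E : Type*} [RCLike 𝕜] [NormedAddCommGroup E] [InnerProductSpace 𝕜 E]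

lemma HilbertBasis.dense_iUnion_span_range_fin (b : HilbertBasis ℕ 𝕜 E) :
    Dense (⋃ n, (Submodule.span 𝕜 (Set.range fun i : Fin (n + 1) => b i) : Set E)) := by
  intro x
  refine mem_closure_of_tendsto (b.hasSum_repr x).tendsto_sum_nat
    (Eventually.of_forall fun n => ?_)
  refine Set.mem_iUnion.2 ⟨n, Submodule.sum_mem _ fun i hi => Submodule.smul_mem _ _ ?_⟩
  exact Submodule.subset_span ⟨⟨i, by simp at hi; omega⟩, rfl⟩

theorem tendsto_galerkinApprox (b : HilbertBasis ℕ 𝕜 E) {T R : E →L[𝕜] E}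
    (hRT : ∀ x, R (T x) = x) (hTR : ∀ x, T (R x) = x) {c : ℝ} (hc : 0 < c)
    (hT : ∀ f, ‖f‖ ^ 2 * c ≤ ‖⟪T f, f⟫_𝕜‖) (η : E) :
    Tendsto (fun n => galerkinApprox T (fun i : Fin (n + 1) => b i) η) atTop (𝓝 (R η)) := by
  have hb (n : ℕ) : Orthonormal 𝕜 fun i : Fin (n + 1) => b i :=
    b.orthonormal.comp _ Fin.val_injective
  have hLip (n : ℕ) : LipschitzWith c⁻¹.toNNReal (galerkinApprox T fun i : Fin (n + 1) => b i) :=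
    LipschitzWith.of_dist_le_mul fun x y => by
      rw [dist_eq_norm, dist_eq_norm, ← galerkinApprox_sub, Real.coe_toNNReal _ (by positivity)]
      exact norm_galerkinApprox_le (hb n) hc hT _
  have hclosed := (LipschitzWith.uniformEquicontinuous _ _ hLip).equicontinuous
    |>.isClosed_setOfPred_tendsto (l := atTop) R.continuous
  have hdense :
      Dense (T '' ⋃ n, (Submodule.span 𝕜 (Set.range fun i : Fin (n + 1) => b i) : Set E)) :=
    (Function.LeftInverse.surjective hTR).denseRange.dense_image T.continuous
      b.dense_iUnion_span_range_fin
  refine hclosed.closure_subset_iff.2 ?_ (hdense η)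
  rintro _ ⟨ψ, hψ, rfl⟩
  obtain ⟨m, hψ⟩ := Set.mem_iUnion.1 hψ
  refine tendsto_const_nhds.congr' (eventually_atTop.2 ⟨m, fun n hmn => ?_⟩)
  rw [hRT]
  have hsub : (Set.range fun i : Fin (m + 1) => b i) ⊆ Set.range fun i : Fin (n + 1) => b i :=
    Set.range_subset_iff.2 fun i => ⟨⟨i, by omega⟩, rfl⟩
  exact (galerkinApprox_apply_of_mem_span (hb n) hc hT (Submodule.span_mono hsub hψ)).symm

end StrongConvergence

lemma pos_of_isGLB_norm_image {E : Type*} [SeminormedAddCommGroup E] {S : Set E}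
    (h0 : (0 : E) ∉ closure S) {d : ℝ} (hd : IsGLB ((‖·‖) '' S) d) : 0 < d := by
  refine ((Metric.infDist_pos_iff_notMem_closure hd.nonempty.of_image).1 h0).trans_le (hd.2 ?_)
  rintro _ ⟨w, hw, rfl⟩
  simpa using Metric.infDist_le_dist_of_mem (x := 0) hw

lemma infDist_mul_le_norm_inner_pencil (A B : ellTwo →L[ℂ] ellTwo) {d : ℝ}
    (hd : ∀ f : ellTwo, ‖f‖ = 1 → d ≤ ‖⟪B f, f⟫_ℂ‖) (z : ℂ) {g : ellTwo} (hg : ‖g‖ = 1) :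
    d * Metric.infDist z (numericalRange A B) ≤ ‖⟪(z • B - A) g, g⟫_ℂ‖ := by
  have hpencil (u : ℂ) : ⟪(u • B - A) g, g⟫_ℂ = conj u * ⟪B g, g⟫_ℂ - ⟪A g, g⟫_ℂ := by
    simp [mul_comm]
  have hdb : d ≤ ‖⟪B g, g⟫_ℂ‖ := hd g hg
  generalize ⟪B g, g⟫_ℂ = b at hpencil hdb
  rcases eq_or_ne b 0 with rfl | hb
  · rw [norm_zero] at hdb
    exact (mul_nonpos_of_nonpos_of_nonneg hdb Metric.infDist_nonneg).trans (norm_nonneg _)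
  set w := conj (⟪A g, g⟫_ℂ / b)
  have hw : w ∈ numericalRange A B :=
    ⟨g, norm_ne_zero_iff.1 (by simp [hg]),
      by rw [hpencil, Complex.conj_conj, div_mul_cancel₀ _ hb, sub_self]⟩
  have hzw : ⟪(z • B - A) g, g⟫_ℂ = conj (z - w) * b := by
    rw [hpencil, map_sub, Complex.conj_conj, sub_mul, div_mul_cancel₀ _ hb]
  rw [hzw, norm_mul, Complex.norm_conj, ← dist_eq_norm, mul_comm (dist z w)]
  exact mul_le_mul hdb (Metric.infDist_le_dist_of_mem hw) Metric.infDist_nonneg (norm_nonneg _)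

def stdHilbertBasis : HilbertBasis ℕ ℂ ellTwo :=
  HilbertBasis.ofRepr (LinearIsometryEquiv.refl ℂ _)

lemma coe_stdHilbertBasis : ⇑stdHilbertBasis = fun i => (stdBasis i : ellTwo) :=
  funext fun i => (HilbertBasis.repr_symm_single stdHilbertBasis i).symm

lemma inner_stdBasis_left (i : ℕ) (η : ellTwo) : ⟪(stdBasis i : ellTwo), η⟫_ℂ = η i := by
  simp [_root_.stdBasis, lp.inner_single_left]

lemma galerkinApprox_stdBasis_eq_finiteSection (A B : ellTwo →L[ℂ] ellTwo) (z : ℂ) (n : ℕ)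
    (η : ellTwo) :
    galerkinApprox (z • B - A) (fun i : Fin (n + 1) => stdBasis i) η =
      ∑ j : Fin (n + 1),
        ((finiteSection A B z n)⁻¹ *ᵥ (fun i : Fin (n + 1) => η (i : ℕ))) j • stdBasis (j : ℕ) := by
  have hM :
      galerkinMatrix (z • B - A) (fun i : Fin (n + 1) => stdBasis i) = finiteSection A B z n := by
    ext i j
    simp [galerkinMatrix, finiteSection, inner_sub_right, inner_smul_right]
  simp only [galerkinApprox, hM, inner_stdBasis_left]

/-- Assume `0 ∉ closure Θ(B)` and let `d = inf_{‖f‖=1}|⟨Bf,f⟩|`.  Then for each `z` with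
`dist(z, W(A,B)) > 0` the operator `z B - A` is boundedly invertible with
`‖(zB - A)⁻¹‖ ≤ 1/(d · dist(z, W(A,B)))`, and the truncated resolvents converge strongly:
for every `η ∈ ℓ²`, `(z B_{[0:n]} - A_{[0:n]})⁻¹ η → (zB - A)⁻¹ η` as `n → ∞`, the finite
sections being regarded as operators on `ℓ²` in the natural way (the inverse finite matrix
acts on the first `n+1` coordinates of `η`, the result being embedded back in `ℓ²`). -/
theorem stmt_12 (A B : ellTwo →L[ℂ] ellTwo) (d : ℝ)
    (hΘ : (0 : ℂ) ∉ closure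
      {w : ℂ | ∃ f : ellTwo, ‖f‖ = 1 ∧ w = (inner ℂ (B f) f : ℂ)})
    (hd : IsGLB {r : ℝ | ∃ f : ellTwo, ‖f‖ = 1 ∧ r = ‖(inner ℂ (B f) f : ℂ)‖} d)
    (z : ℂ) (hz : 0 < Metric.infDist z (numericalRange A B)) :
    ∃ R : ellTwo →L[ℂ] ellTwo,
      (∀ x, R ((z • B - A) x) = x) ∧
      (∀ x, (z • B - A) (R x) = x) ∧
      ‖R‖ ≤ 1 / (d * Metric.infDist z (numericalRange A B)) ∧
      ∀ η : ellTwo,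
        Tendsto (fun n : ℕ =>
            ∑ j : Fin (n + 1),
              ((finiteSection A B z n)⁻¹ *ᵥ (fun i : Fin (n + 1) => η (i : ℕ))) j •
                stdBasis (j : ℕ))
          atTop (nhds (R η)) := by
  have hd_pos : 0 < d := pos_of_isGLB_norm_image hΘ (by convert hd using 1; ext; simp [eq_comm])
  have hc : 0 < d * Metric.infDist z (numericalRange A B) := mul_pos hd_pos hz
  have hT : ∀ f, ‖f‖ ^ 2 * (d * Metric.infDist z (numericalRange A B)) ≤ ‖⟪(z • B - A) f, f⟫_ℂ‖ :=
    sq_norm_mul_le_norm_inner_of_forall_norm_eq_one _ fun g hg =>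
      infDist_mul_le_norm_inner_pencil A B (fun f hf => hd.1 ⟨f, hf, rfl⟩) z hg
  obtain ⟨R, hRT, hTR, hR⟩ := exists_inverse_of_coercive _ hc hT
  refine ⟨R, hRT, hTR, by rwa [one_div], fun η => ?_⟩
  simpa only [coe_stdHilbertBasis, galerkinApprox_stdBasis_eq_finiteSection] using
    tendsto_galerkinApprox stdHilbertBasis hRT hTR hc hT η

end
end

section
/- For the tridiagonal pencil zB − A with bounded A, B, the functions u_n(z) = q_n(z)/q_{n+1}(z) satisfy, for x, y in any compact subset K of the resolvent set ρ(A,B), the identity α_n^L(x) q_{n+1}^L(x) q_n^R(y) − α_n^R(y) q_n^L(x) q_{n+1}^R(y) = (x − y) · q^L_{[0:n]}(x) B q^R_{[0:n]}(y), where q^L_{[0:n]}, q^R_{[0:n]} denote the truncated row/column vectors of scaled denominators. -/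
open Finset

/-!
A discrete Christoffel–Darboux identity, proved by induction on `n`. Since `B` is tridiagonal,
enlarging the block `[0:n]` to `[0:n+1]` adds to `q^L B q^R` only the three entries of `B` that
touch index `n + 1`; the three-term recurrences of `q^L(x)` and `q^R(y)` at index `n + 1` show that
the left-hand side changes by exactly `x - y` times these new terms. The case `n = 0` is the first
recurrence.
-/

section Tridiagonal

variable {R : Type*} [CommRing R]

def IsTridiagonal (B : ℕ → ℕ → R) : Prop :=
  ∀ j k, j ≠ k → j ≠ k + 1 → k ≠ j + 1 → B j k = 0

variable {B : ℕ → ℕ → R}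

lemma IsTridiagonal.sum_range_succ_col (hB : IsTridiagonal B) (u : ℕ → R) (n : ℕ) :
    ∑ i ∈ range (n + 1), u i * B i (n + 1) = u n * B n (n + 1) :=
  sum_eq_single_of_mem n (self_mem_range_succ n) fun i hi hin => by
    rw [hB i (n + 1) (by grind) (by grind) (by grind), mul_zero]

lemma IsTridiagonal.sum_range_succ_row (hB : IsTridiagonal B) (v : ℕ → R) (n : ℕ) :
    ∑ k ∈ range (n + 1), B (n + 1) k * v k = B (n + 1) n * v n :=
  sum_eq_single_of_mem n (self_mem_range_succ n) fun k hk hkn => by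
    rw [hB (n + 1) k (by grind) (by grind) (by grind), zero_mul]

lemma IsTridiagonal.bilin_range_succ (hB : IsTridiagonal B) (u v : ℕ → R) (n : ℕ) :
    ∑ i ∈ range (n + 2), ∑ k ∈ range (n + 2), u i * B i k * v k =
      ∑ i ∈ range (n + 1), ∑ k ∈ range (n + 1), u i * B i k * v k +
        u n * B n (n + 1) * v (n + 1) + u (n + 1) * B (n + 1) n * v n +
        u (n + 1) * B (n + 1) (n + 1) * v (n + 1) := by
  have hcol : ∑ i ∈ range (n + 1), u i * B i (n + 1) * v (n + 1) =
      u n * B n (n + 1) * v (n + 1) := by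
    rw [← sum_mul, hB.sum_range_succ_col]
  have hrow : ∑ k ∈ range (n + 1), u (n + 1) * B (n + 1) k * v k =
      u (n + 1) * B (n + 1) n * v n := by
    simp_rw [mul_assoc, ← mul_sum, hB.sum_range_succ_row]
  simp only [sum_range_succ _ (n + 1), sum_add_distrib, hcol, hrow]
  ring

end Tridiagonal

theorem stmt_13_general (Am Bm : ℕ → ℕ → ℂ)
    (htriB : ∀ j k, j ≠ k → j ≠ k + 1 → k ≠ j + 1 → Bm j k = 0)
    (β : ℂ → ℕ → ℂ) (aL aR : ℂ → ℕ → ℂ)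
    (hβ : ∀ z n, β z n = z * Bm n n - Am n n)
    (haL : ∀ z n, aL z n = -(z * Bm (n + 1) n - Am (n + 1) n))
    (haR : ∀ z n, aR z n = -(z * Bm n (n + 1) - Am n (n + 1)))
    (x y : ℂ) (qLx qRy : ℕ → ℂ)
    (hqL1 : aL x 0 * qLx 1 - β x 0 * qLx 0 = 0)
    (hqLrec : ∀ n, aL x (n + 1) * qLx (n + 2) - β x (n + 1) * qLx (n + 1) +
      aR x n * qLx n = 0)
    (hqR1 : aR y 0 * qRy 1 - β y 0 * qRy 0 = 0)
    (hqRrec : ∀ n, aR y (n + 1) * qRy (n + 2) - β y (n + 1) * qRy (n + 1) +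
      aL y n * qRy n = 0) :
    ∀ n : ℕ,
      aL x n * qLx (n + 1) * qRy n - aR y n * qLx n * qRy (n + 1) =
        (x - y) *
          ∑ i ∈ range (n + 1), ∑ k ∈ range (n + 1), qLx i * Bm i k * qRy k := by
  intro n
  induction n with
  | zero =>
    simp only [zero_add, range_one, sum_singleton, hβ, haL, haR] at hqL1 hqR1 ⊢
    linear_combination qRy 0 * hqL1 - qLx 0 * hqR1
  | succ n ih =>
    have hL := hqLrec n
    have hR := hqRrec n
    rw [IsTridiagonal.bilin_range_succ htriB]
    simp only [hβ, haL, haR] at hL hR ih ⊢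
    linear_combination ih + qRy (n + 1) * hL - qLx (n + 1) * hR

/-- For the tridiagonal pencil `z B - A` (with `(n,n)` entry `β n (z) = z*B n n - A n n`,
`(n+1,n)` entry `-αL n (z) = z*B (n+1) n - A (n+1) n` and `(n,n+1)` entry
`-αR n (z) = z*B n (n+1) - A n (n+1)`), the scaled denominators satisfy, for any two points
`x`, `y` (in particular for `x, y` in a compact subset of the resolvent set, where they are
defined), the identity
`αL n (x) qᴸ (n+1) (x) qᴿ n (y) - αR n (y) qᴸ n (x) qᴿ (n+1) (y)
  = (x - y) · qᴸ_{[0:n]}(x) B qᴿ_{[0:n]}(y)`. -/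
theorem stmt_13 (Am Bm : ℕ → ℕ → ℂ)
    (htriA : ∀ j k, j ≠ k → j ≠ k + 1 → k ≠ j + 1 → Am j k = 0)
    (htriB : ∀ j k, j ≠ k → j ≠ k + 1 → k ≠ j + 1 → Bm j k = 0)
    (β : ℂ → ℕ → ℂ) (aL aR : ℂ → ℕ → ℂ)
    (hβ : ∀ z n, β z n = z * Bm n n - Am n n)
    (haL : ∀ z n, aL z n = -(z * Bm (n + 1) n - Am (n + 1) n))
    (haR : ∀ z n, aR z n = -(z * Bm n (n + 1) - Am n (n + 1)))
    (x y : ℂ) (qLx qRy : ℕ → ℂ)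
    (hqL0 : qLx 0 = 1)
    (hqL1 : aL x 0 * qLx 1 - β x 0 * qLx 0 = 0)
    (hqLrec : ∀ n, aL x (n + 1) * qLx (n + 2) - β x (n + 1) * qLx (n + 1) +
      aR x n * qLx n = 0)
    (hqR0 : qRy 0 = 1)
    (hqR1 : aR y 0 * qRy 1 - β y 0 * qRy 0 = 0)
    (hqRrec : ∀ n, aR y (n + 1) * qRy (n + 2) - β y (n + 1) * qRy (n + 1) +
      aL y n * qRy n = 0) :
    ∀ n : ℕ,
      aL x n * qLx (n + 1) * qRy n - aR y n * qLx n * qRy (n + 1) =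
        (x - y) *
          ∑ i ∈ range (n + 1), ∑ k ∈ range (n + 1), qLx i * Bm i k * qRy k :=
  stmt_13_general Am Bm htriB β aL aR hβ haL haR x y qLx qRy hqL1 hqLrec hqR1 hqRrec
end

section
/- Let B be the infinite real symmetric tridiagonal matrix with diagonal entries B_{j,j} ≥ 1 satisfying B_{j,j} = 1 + B_{j+1,j}² where B_{j+1,j} = B_{j,j+1} > 0 are the off-diagonal entries, and assume B is bounded on ℓ². Then for every y = (y_0, y_1, …) ∈ ℓ² with y_0 = ⋯ = y_{k-1} = 0, one has ⟨By, y⟩ ≥ |y_k|². In particular B is positive semidefinite and ⟨By, y⟩ ≥ |y_0|² for all y. -/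
/-!
Write `b` for the off-diagonal entries. Since `B j j = 1 + b j ^ 2`, summation by parts turns the
quadratic form of a finitely supported `z` into the sum of squares
`⟪B z, z⟫ = |z 0|² + ∑ j, |b j * z j + z (j + 1)|²`. If `z i = 0` for `i < k`, the `j = k - 1`
summand is `|z k|²` (for `k = 0` the first term is), so `⟪B z, z⟫ ≥ |z k|²`. The finite sections
of `y ∈ ℓ²` converge to `y` and keep its leading zeros, so the bound passes to `y` by continuity.
-/

noncomputable section

open Finset Filter Topology ComplexConjugate

section TridiagonalForm

variable (b : ℕ → ℝ) (z : ℕ → ℂ)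

def tridiagApply (j : ℕ) : ℂ :=
  (if j = 0 then 0 else (b (j - 1) : ℂ) * z (j - 1)) + (1 + (b j : ℂ) ^ 2) * z j +
    (b j : ℂ) * z (j + 1)

def tridiagSumSq (n : ℕ) : ℝ :=
  ‖z 0‖ ^ 2 + ∑ j ∈ range n, ‖(b j : ℂ) * z j + z (j + 1)‖ ^ 2

def tridiagBoundary : ℕ → ℝ
  | 0 => ‖z 0‖ ^ 2
  | j + 1 => ‖z (j + 1)‖ ^ 2 + b j * (conj (z j) * z (j + 1)).re

theorem re_mul_conj_tridiagApply (j : ℕ) :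
    (z j * conj (tridiagApply b z j)).re =
      ‖(b j : ℂ) * z j + z (j + 1)‖ ^ 2 + (tridiagBoundary b z j - tridiagBoundary b z (j + 1)) := by
  cases j <;>
  simp [tridiagApply, tridiagBoundary, Complex.sq_norm, Complex.normSq_apply, ← Complex.ofReal_pow] <;>
  ring

theorem sum_re_mul_conj_tridiagApply {n : ℕ} (hz : ∀ j, n ≤ j → z j = 0) :
    ∑ j ∈ range n, (z j * conj (tridiagApply b z j)).re = tridiagSumSq b z n := by
  have hboundary : tridiagBoundary b z n = 0 := by
    cases n <;> simp [tridiagBoundary, hz]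
  rw [sum_congr rfl fun j _ => re_mul_conj_tridiagApply b z j, sum_add_distrib, sum_range_sub',
    hboundary, tridiagBoundary, tridiagSumSq]
  ring

theorem sq_norm_le_tridiagSumSq {k n : ℕ} (hz : ∀ i < k, z i = 0) (hkn : k ≤ n) :
    ‖z k‖ ^ 2 ≤ tridiagSumSq b z n := by
  rw [tridiagSumSq]
  cases k with
  | zero => exact le_add_of_nonneg_right (sum_nonneg fun j _ => by positivity)
  | succ m =>
    have hterm : ‖(b m : ℂ) * z m + z (m + 1)‖ ^ 2 = ‖z (m + 1)‖ ^ 2 := by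
      simp [hz m m.lt_succ_self]
    rw [hz 0 m.succ_pos, norm_zero, zero_pow two_ne_zero, zero_add, ← hterm]
    exact single_le_sum (f := fun j => ‖(b j : ℂ) * z j + z (j + 1)‖ ^ 2)
      (fun j _ => by positivity) (mem_range.2 hkn)

end TridiagonalForm

theorem lp.sum_single_apply {α : Type*} {E : α → Type*} [∀ i, NormedAddCommGroup (E i)]
    {p : ENNReal} [DecidableEq α] (s : Finset α) (f : ∀ i, E i) (j : α) :
    (∑ i ∈ s, lp.single p i (f i)) j = if j ∈ s then f j else 0 := by
  rw [lp.coeFn_sum, Finset.sum_apply]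
  simp [lp.single_apply]

section Operator

variable (B : ellTwo →L[ℂ] ellTwo) (b : ℕ → ℝ)

theorem re_inner_eq_tridiagSumSq (hB : ∀ (y : ellTwo) (j : ℕ), B y j = tridiagApply b y j)
    {n : ℕ} (z : ellTwo) (hz : ∀ j, n ≤ j → z j = 0) :
    (inner ℂ (B z) z).re = tridiagSumSq b z n := by
  rw [lp.inner_eq_tsum, tsum_eq_sum (s := range n) fun j hj => by simp [hz j (by simpa using hj)],
    Complex.re_sum, ← sum_re_mul_conj_tridiagApply b z hz]
  exact sum_congr rfl fun j _ => by rw [RCLike.inner_apply, hB]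

theorem sq_norm_apply_le_re_inner (hB : ∀ (y : ellTwo) (j : ℕ), B y j = tridiagApply b y j)
    (y : ellTwo) (k : ℕ) (hy : ∀ i < k, y i = 0) :
    ‖y k‖ ^ 2 ≤ (inner ℂ (B y) y).re := by
  set trunc : ℕ → ellTwo := fun n => ∑ i ∈ range n, lp.single 2 i (y i)
  have htrunc : Tendsto trunc atTop (𝓝 y) :=
    (lp.hasSum_single ENNReal.ofNat_ne_top y).tendsto_sum_nat
  have hform : Tendsto (fun n => (inner ℂ (B (trunc n)) (trunc n)).re) atTop
      (𝓝 (inner ℂ (B y) y).re) :=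
    (Complex.continuous_re.tendsto _).comp ((B.continuous.tendsto y).comp htrunc |>.inner htrunc)
  refine ge_of_tendsto hform ((eventually_gt_atTop k).mono fun n hkn => ?_)
  have happly : ∀ j, trunc n j = if j < n then y j else 0 := fun j => by
    simp only [trunc, lp.sum_single_apply, mem_range]
  calc ‖y k‖ ^ 2 = ‖trunc n k‖ ^ 2 := by rw [happly, if_pos hkn]
    _ ≤ _ := sq_norm_le_tridiagSumSq b _ (fun i hi => by simp [happly, hy i hi]) hkn.le
    _ = _ := (re_inner_eq_tridiagSumSq B b hB _ fun j hj => by simp [happly, hj]).symm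

end Operator

theorem stmt_17_general (B : ellTwo →L[ℂ] ellTwo) (bOff : ℕ → ℝ)
    (hact : ∀ (y : ellTwo) (j : ℕ),
      (B y) j = (if j = 0 then 0 else (bOff (j - 1) : ℂ) * y (j - 1)) +
        (1 + (bOff j : ℂ) ^ 2) * y j + (bOff j : ℂ) * y (j + 1)) :
    (∀ (y : ellTwo) (k : ℕ), (∀ i < k, y i = 0) →
      ‖y k‖ ^ 2 ≤ (inner ℂ (B y) y : ℂ).re) ∧
    (∀ y : ellTwo, 0 ≤ (inner ℂ (B y) y : ℂ).re) ∧
    (∀ y : ellTwo, ‖y 0‖ ^ 2 ≤ (inner ℂ (B y) y : ℂ).re) := by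
  have hbound := sq_norm_apply_le_re_inner B bOff hact
  exact ⟨hbound, fun y => (sq_nonneg _).trans (hbound y 0 nofun), fun y => hbound y 0 nofun⟩

/-- Let `B` be the bounded self-adjoint tridiagonal operator on `ℓ²` with off-diagonal
entries `bOff j = B (j+1) j = B j (j+1) > 0` and diagonal entries `B j j = 1 + bOff j ^ 2`
(so `(B y) j = bOff (j-1) * y (j-1) + (1 + bOff j ^ 2) * y j + bOff j * y (j+1)`).
Then for every `y ∈ ℓ²` with `y 0 = ⋯ = y (k-1) = 0` one has `⟨B y, y⟩ ≥ |y k|²`.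
In particular `B` is positive semidefinite and `⟨B y, y⟩ ≥ |y 0|²` for all `y`. -/
theorem stmt_17 (B : ellTwo →L[ℂ] ellTwo) (bOff : ℕ → ℝ)
    (hpos : ∀ j, 0 < bOff j)
    (hact : ∀ (y : ellTwo) (j : ℕ),
      (B y) j = (if j = 0 then 0 else (bOff (j - 1) : ℂ) * y (j - 1)) +
        (1 + (bOff j : ℂ) ^ 2) * y j + (bOff j : ℂ) * y (j + 1)) :
    (∀ (y : ellTwo) (k : ℕ), (∀ i < k, y i = 0) →
      ‖y k‖ ^ 2 ≤ (inner ℂ (B y) y : ℂ).re) ∧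
    (∀ y : ellTwo, 0 ≤ (inner ℂ (B y) y : ℂ).re) ∧
    (∀ y : ellTwo, ‖y 0‖ ^ 2 ≤ (inner ℂ (B y) y : ℂ).re) :=
  stmt_17_general B bOff hact

end
end

section
/- Let B be as above (tridiagonal, B_{j,j} = 1 + B_{j+1,j}², bounded) and suppose additionally B_{j+1,j} → 0 as j → ∞. Then B is a compact perturbation of the identity and 0 ∉ closure(Θ(B)); in particular B is boundedly invertible. -/
/-!
Write `S` for the weighted shift `e_j ↦ b_j e_{j+1}`. The tridiagonal operator factors as
`B = (1 + S)† (1 + S)`, and `S†` is the backward shift with the same weights. Since `b_j → 0`,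
both shifts are norm limits of finite-rank truncations, hence compact, and so is
`B - 1 = S + S† + S† S`. Solving `(1 + S) y = 0` coordinate by coordinate shows that `1 + S` is
injective, so by the Fredholm alternative it is invertible. Then
`⟪B y, y⟫ = ‖(1 + S) y‖² ≥ ‖(1 + S)⁻¹‖⁻² ‖y‖²` keeps the numerical range away from `0`, and `B`
is invertible as a product of invertible operators.
-/

noncomputable section

open Filter

open Set Function

theorem ContinuousLinearMap.isCompactOperator_smulRight {𝕜 E F : Type*}
    [NontriviallyNormedField 𝕜] [LocallyCompactSpace 𝕜] [NormedAddCommGroup E] [NormedSpace 𝕜 E]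
    [NormedAddCommGroup F] [NormedSpace 𝕜 F] (φ : E →L[𝕜] 𝕜) (v : F) :
    IsCompactOperator (φ.smulRight v) :=
  (isCompactOperator_of_locallyCompactSpace_rng ((1 : 𝕜 →L[𝕜] 𝕜).smulRight v)).comp_clm φ

namespace ellTwo

theorem hasSum_norm_sq (y : ellTwo) : HasSum (fun i => ‖y i‖ ^ 2) (‖y‖ ^ 2) := by
  simpa only [ENNReal.toReal_ofNat, Real.rpow_two] using lp.hasSum_norm (p := 2) (by norm_num) y

theorem memℓp_of_summable_norm_sq {f : ℕ → ℂ} (hf : Summable fun i => ‖f i‖ ^ 2) :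
    Memℓp f 2 :=
  memℓp_gen (by simpa only [ENNReal.toReal_ofNat, Real.rpow_two] using hf)

section WeightedComp

variable {c : ℕ → ℝ} {σ : ℕ → ℕ} {M : ℝ}

theorem norm_sq_weighted_le_indicator (hc : ∀ j, |c j| ≤ M) (y : ellTwo) (j : ℕ) :
    ‖(c j : ℂ) * y (σ j)‖ ^ 2 ≤ (support c).indicator (fun j => M ^ 2 * ‖y (σ j)‖ ^ 2) j := by
  by_cases hj : c j = 0
  · simp [hj]
  · rw [indicator_of_mem hj, norm_mul, mul_pow, Complex.norm_real, Real.norm_eq_abs]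
    gcongr
    exact hc j

theorem summable_indicator_norm_sq_comp (hσ : InjOn σ (support c)) (y : ellTwo) :
    Summable ((support c).indicator fun j => M ^ 2 * ‖y (σ j)‖ ^ 2) :=
  summable_subtype_iff_indicator.1 <|
    ((hasSum_norm_sq y).summable.comp_injective hσ.injective).mul_left (M ^ 2)

theorem summable_norm_sq_weighted (hc : ∀ j, |c j| ≤ M) (hσ : InjOn σ (support c))
    (y : ellTwo) : Summable fun j => ‖(c j : ℂ) * y (σ j)‖ ^ 2 :=
  (summable_indicator_norm_sq_comp hσ y).of_nonneg_of_le (fun _ => by positivity)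
    (norm_sq_weighted_le_indicator hc y)

theorem tsum_norm_sq_weighted_le (hc : ∀ j, |c j| ≤ M) (hσ : InjOn σ (support c))
    (y : ellTwo) : ∑' j, ‖(c j : ℂ) * y (σ j)‖ ^ 2 ≤ M ^ 2 * ‖y‖ ^ 2 :=
  calc ∑' j, ‖(c j : ℂ) * y (σ j)‖ ^ 2
      ≤ ∑' j, (support c).indicator (fun j => M ^ 2 * ‖y (σ j)‖ ^ 2) j :=
        (summable_norm_sq_weighted hc hσ y).tsum_le_tsum (norm_sq_weighted_le_indicator hc y)
          (summable_indicator_norm_sq_comp hσ y)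
    _ = M ^ 2 * ∑' j : support c, ‖y (σ j)‖ ^ 2 := by rw [← tsum_subtype, tsum_mul_left]
    _ ≤ M ^ 2 * ‖y‖ ^ 2 := by
        rw [← (hasSum_norm_sq y).tsum_eq]
        gcongr
        exact tsum_comp_le_tsum_of_inj (hasSum_norm_sq y).summable (fun _ => by positivity)
          hσ.injective

variable (c σ) in
def weightedComp (hc : ∀ j, |c j| ≤ M) (hσ : InjOn σ (support c)) : ellTwo →L[ℂ] ellTwo :=
  LinearMap.mkContinuous
    { toFun := fun y => ⟨fun j => (c j : ℂ) * y (σ j),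
        memℓp_of_summable_norm_sq (summable_norm_sq_weighted hc hσ y)⟩
      map_add' := fun x y => lp.ext <| funext fun j => mul_add _ _ _
      map_smul' := fun a x => lp.ext <| funext fun j => mul_left_comm _ _ _ }
    M fun y => by
      have hM : 0 ≤ M := (abs_nonneg _).trans (hc 0)
      rw [← pow_le_pow_iff_left₀ (norm_nonneg _) (by positivity) two_ne_zero, mul_pow,
        ← (hasSum_norm_sq _).tsum_eq]
      exact tsum_norm_sq_weighted_le hc hσ y

@[simp]
theorem weightedComp_apply (hc : ∀ j, |c j| ≤ M) (hσ : InjOn σ (support c)) (y : ellTwo)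
    (j : ℕ) : weightedComp c σ hc hσ y j = c j * y (σ j) :=
  rfl

theorem norm_weightedComp_le (hc : ∀ j, |c j| ≤ M) (hσ : InjOn σ (support c)) :
    ‖weightedComp c σ hc hσ‖ ≤ M :=
  LinearMap.mkContinuous_norm_le _ ((abs_nonneg _).trans (hc 0)) _

theorem isCompactOperator_weightedComp_of_support_subset (hc : ∀ j, |c j| ≤ M)
    (hσ : InjOn σ (support c)) {s : Finset ℕ} (hs : support c ⊆ s) :
    IsCompactOperator (weightedComp c σ hc hσ) := by
  classical
  have hsum : weightedComp c σ hc hσ =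
      ∑ i ∈ s, ((c i : ℂ) • lp.evalCLM ℂ _ 2 (σ i)).smulRight (lp.single 2 i 1) := by
    ext y j
    rw [weightedComp_apply, sum_apply, lp.coeFn_sum, Finset.sum_apply]
    simp only [ContinuousLinearMap.smulRight_apply, smul_apply, lp.coeFn_smul,
      Pi.smul_apply, lp.single_apply, Pi.single_apply, smul_eq_mul, mul_ite, mul_one, mul_zero]
    rw [Finset.sum_ite_eq]
    split_ifs with hj
    · rfl
    · simp [notMem_support.1 fun h => hj (hs h)]
  rw [hsum]
  exact (compactOperator (RingHom.id ℂ) ellTwo ellTwo).sum_mem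
    fun i _ => ContinuousLinearMap.isCompactOperator_smulRight _ _

theorem weightedComp_sub_weightedComp {c' d : ℕ → ℝ} {M' M'' : ℝ} (hc : ∀ j, |c j| ≤ M)
    (hσ : InjOn σ (support c)) (hc' : ∀ j, |c' j| ≤ M') (hσ' : InjOn σ (support c'))
    (hd : ∀ j, |d j| ≤ M'') (hσd : InjOn σ (support d)) (hcd : c - c' = d) :
    weightedComp c σ hc hσ - weightedComp c' σ hc' hσ' = weightedComp d σ hd hσd := by
  subst hcd
  ext y j
  simp [sub_mul]

theorem isCompactOperator_weightedComp (hc : ∀ j, |c j| ≤ M) (hσ : InjOn σ (support c))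
    (hc0 : Tendsto c atTop (nhds 0)) : IsCompactOperator (weightedComp c σ hc hσ) := by
  have hcN (N : ℕ) (j : ℕ) : |(Iio N).indicator c j| ≤ M :=
    (norm_indicator_le_norm_self c j).trans (hc j)
  have hσN (N : ℕ) : InjOn σ (support ((Iio N).indicator c)) := hσ.mono (by simp)
  refine isCompactOperator_of_tendsto (l := atTop)
    (F := fun N => weightedComp ((Iio N).indicator c) σ (hcN N) (hσN N)) ?_
    (Eventually.of_forall fun N => isCompactOperator_weightedComp_of_support_subset _ _
      (s := Finset.range N) (by simp))
  rw [Metric.tendsto_atTop]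
  intro ε hε
  obtain ⟨N, hN⟩ := Metric.tendsto_atTop.1 hc0 (ε / 2) (half_pos hε)
  refine ⟨N, fun n hn => ?_⟩
  have htail (j : ℕ) : |(Iio n)ᶜ.indicator c j| ≤ ε / 2 := by
    rw [indicator_apply]
    split_ifs with hj
    · simpa [Real.dist_0_eq_abs] using (hN j (hn.trans (not_lt.1 hj))).le
    · simpa using (half_pos hε).le
  rw [dist_comm, dist_eq_norm, weightedComp_sub_weightedComp hc hσ _ _ htail (hσ.mono (by simp))
    (indicator_compl _ _).symm]
  exact (norm_weightedComp_le _ _).trans_lt (half_lt_self hε)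

end WeightedComp

section WeightedShift

variable {b : ℕ → ℝ} {M : ℝ}

def shiftedWeight (b : ℕ → ℝ) (j : ℕ) : ℝ := if j = 0 then 0 else b (j - 1)

theorem abs_shiftedWeight_le (hb : ∀ j, |b j| ≤ M) (j : ℕ) : |shiftedWeight b j| ≤ M := by
  unfold shiftedWeight
  split_ifs
  · simpa using (abs_nonneg _).trans (hb 0)
  · exact hb _

theorem injOn_pred_support_shiftedWeight : InjOn (· - 1) (support (shiftedWeight b)) := by
  intro i hi j hj hij
  simp only [mem_support, shiftedWeight, ne_eq, ite_eq_left_iff, not_forall] at hi hj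
  grind

theorem tendsto_shiftedWeight (hb : Tendsto b atTop (nhds 0)) :
    Tendsto (shiftedWeight b) atTop (nhds 0) :=
  (hb.comp (tendsto_sub_atTop_nat 1)).congr' <|
    eventually_atTop.2 ⟨1, fun j hj => by simp [shiftedWeight, show j ≠ 0 by omega]⟩

def weightedShift (hb : ∀ j, |b j| ≤ M) : ellTwo →L[ℂ] ellTwo :=
  weightedComp (shiftedWeight b) (· - 1) (abs_shiftedWeight_le hb) injOn_pred_support_shiftedWeight

def weightedBackwardShift (hb : ∀ j, |b j| ≤ M) : ellTwo →L[ℂ] ellTwo :=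
  weightedComp b (· + 1) hb (add_left_injective 1).injOn

variable (hb : ∀ j, |b j| ≤ M)

@[simp]
theorem weightedShift_apply_zero (y : ellTwo) : weightedShift hb y 0 = 0 := by
  simp [weightedShift, shiftedWeight]

@[simp]
theorem weightedShift_apply_succ (y : ellTwo) (k : ℕ) :
    weightedShift hb y (k + 1) = b k * y k := by
  simp [weightedShift, shiftedWeight]

@[simp]
theorem weightedBackwardShift_apply (y : ellTwo) (k : ℕ) :
    weightedBackwardShift hb y k = b k * y (k + 1) :=
  rfl

theorem adjoint_weightedShift :
    ContinuousLinearMap.adjoint (weightedShift hb) = weightedBackwardShift hb := by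
  refine ((ContinuousLinearMap.eq_adjoint_iff _ _).2 fun x y => ?_).symm
  rw [lp.inner_eq_tsum, lp.inner_eq_tsum,
    (lp.summable_inner (𝕜 := ℂ) x (weightedShift hb y)).tsum_eq_zero_add]
  simp only [weightedShift_apply_zero, inner_zero_right, zero_add, weightedShift_apply_succ,
    weightedBackwardShift_apply]
  refine tsum_congr fun i => ?_
  simp only [RCLike.inner_apply, map_mul, Complex.conj_ofReal]
  ring

theorem injective_one_add_weightedShift :
    Injective (1 + weightedShift hb : ellTwo →L[ℂ] ellTwo) := by
  refine (injective_iff_map_eq_zero _).2 fun y hy => lp.ext <| funext fun k => ?_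
  have hyk (k : ℕ) : y k + weightedShift hb y k = 0 := congrFun (congrArg (⇑) hy) k
  induction k with
  | zero => simpa using hyk 0
  | succ k ih => simpa [ih] using hyk (k + 1)

theorem isCompactOperator_weightedShift (hb0 : Tendsto b atTop (nhds 0)) :
    IsCompactOperator (weightedShift hb) :=
  isCompactOperator_weightedComp _ _ (tendsto_shiftedWeight hb0)

theorem isCompactOperator_weightedBackwardShift (hb0 : Tendsto b atTop (nhds 0)) :
    IsCompactOperator (weightedBackwardShift hb) :=
  isCompactOperator_weightedComp _ _ hb0

theorem eq_adjoint_one_add_weightedShift_mul {B : ellTwo →L[ℂ] ellTwo}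
    (hB : ∀ (y : ellTwo) (j : ℕ), B y j = (if j = 0 then 0 else (b (j - 1) : ℂ) * y (j - 1)) +
        (1 + (b j : ℂ) ^ 2) * y j + (b j : ℂ) * y (j + 1)) :
    B = ContinuousLinearMap.adjoint (1 + weightedShift hb) * (1 + weightedShift hb) := by
  rw [map_add, ← ContinuousLinearMap.star_eq_adjoint, star_one, adjoint_weightedShift]
  ext y j
  simp only [hB, mul_apply_eq_comp, add_apply, one_apply_eq_self, map_add, AddSubgroup.coe_add,
    PreLp.add_apply, weightedBackwardShift_apply, weightedShift, weightedComp_apply,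
    shiftedWeight]
  cases j with
  | zero =>
    simp only [↓reduceIte, zero_add, Complex.ofReal_zero, zero_tsub, zero_mul, one_ne_zero,
      tsub_self]
    ring
  | succ k =>
    simp only [Nat.add_eq_zero_iff, one_ne_zero, and_false, ↓reduceIte, add_tsub_cancel_right]
    ring

end WeightedShift

end ellTwo

section CompactPerturbation

variable {𝕜 X : Type*} [NontriviallyNormedField 𝕜] [NormedAddCommGroup X] [NormedSpace 𝕜 X]
  [CompleteSpace X]

theorem IsCompactOperator.isUnit_one_add_of_injective {K : X →L[𝕜] X} (hK : IsCompactOperator K)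
    (hinj : Injective (1 + K : X →L[𝕜] X)) : IsUnit (1 + K) := by
  rcases hK.hasEigenvalue_or_mem_resolventSet (neg_ne_zero.2 one_ne_zero) with hev | hres
  · obtain ⟨x, hx⟩ := hev.exists_hasEigenvector
    have hKx : K x = -x := by simpa using hx.apply_eq_smul
    exact (hx.2 (hinj (a₂ := 0) (by simp [hKx]))).elim
  · rw [spectrum.mem_resolventSet_iff, map_neg, map_one, ← neg_add', IsUnit.neg_iff] at hres
    exact hres

end CompactPerturbation

section NumericalRange

variable {𝕜 E : Type*} [RCLike 𝕜] [NormedAddCommGroup E] [InnerProductSpace 𝕜 E] [CompleteSpace E]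

theorem zero_notMem_closure_numericalRange_adjoint_mul_self {A : E →L[𝕜] E} (hA : IsUnit A) :
    (0 : 𝕜) ∉ closure {w : 𝕜 | ∃ y : E, ‖y‖ = 1 ∧
      w = inner 𝕜 ((ContinuousLinearMap.adjoint A * A) y) y} := by
  obtain ⟨u, rfl⟩ := hA
  -- the `+ 1` keeps `δ` positive when `E` is trivial and `‖u⁻¹‖ = 0`
  set δ := (‖(↑u⁻¹ : E →L[𝕜] E)‖ + 1)⁻¹
  have hδ : 0 < δ := by positivity
  have hbelow (y : E) (hy : ‖y‖ = 1) : δ ≤ ‖(u : E →L[𝕜] E) y‖ := by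
    rw [inv_le_iff_one_le_mul₀' (by positivity)]
    calc 1 = ‖(↑u⁻¹ : E →L[𝕜] E) ((u : E →L[𝕜] E) y)‖ := by
          rw [← mul_apply_eq_comp, u.inv_mul, one_apply_eq_self, hy]
      _ ≤ ‖(↑u⁻¹ : E →L[𝕜] E)‖ * ‖(u : E →L[𝕜] E) y‖ := ContinuousLinearMap.le_opNorm _ _
      _ ≤ _ := by gcongr; linarith
  have hsub : {w : 𝕜 | ∃ y : E, ‖y‖ = 1 ∧
      w = inner 𝕜 ((ContinuousLinearMap.adjoint (u : E →L[𝕜] E) * u) y) y} ⊆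
      {w | δ ^ 2 ≤ ‖w‖} := by
    rintro _ ⟨y, hy, rfl⟩
    rw [mem_ofPred_eq, mul_apply_eq_comp, ContinuousLinearMap.adjoint_inner_left,
      inner_self_eq_norm_sq_to_K, norm_pow, RCLike.norm_ofReal, abs_norm]
    gcongr
    exact hbelow y hy
  intro h0
  have := closure_minimal hsub (isClosed_le continuous_const continuous_norm) h0
  simp only [mem_ofPred_eq, norm_zero] at this
  exact (pow_pos hδ 2).not_ge this

end NumericalRange

open ellTwo in
theorem stmt_18_general (B : ellTwo →L[ℂ] ellTwo) (bOff : ℕ → ℝ)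
    (hlim : Tendsto bOff atTop (nhds 0))
    (hact : ∀ (y : ellTwo) (j : ℕ),
      (B y) j = (if j = 0 then 0 else (bOff (j - 1) : ℂ) * y (j - 1)) +
        (1 + (bOff j : ℂ) ^ 2) * y j + (bOff j : ℂ) * y (j + 1)) :
    IsCompactOperator (⇑(B - ContinuousLinearMap.id ℂ ellTwo)) ∧
    (0 : ℂ) ∉ closure {w : ℂ | ∃ y : ellTwo, ‖y‖ = 1 ∧ w = (inner ℂ (B y) y : ℂ)} ∧
    ∃ Binv : ellTwo →L[ℂ] ellTwo,
      Binv.comp B = ContinuousLinearMap.id ℂ ellTwo ∧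
      B.comp Binv = ContinuousLinearMap.id ℂ ellTwo := by
  obtain ⟨M, hM⟩ := (Metric.isBounded_range_of_tendsto bOff hlim).exists_norm_le
  have hb (j : ℕ) : |bOff j| ≤ M := hM _ (mem_range_self j)
  set S := weightedShift hb
  have hB : B = ContinuousLinearMap.adjoint (1 + S) * (1 + S) :=
    eq_adjoint_one_add_weightedShift_mul hb hact
  have hS : IsCompactOperator S := isCompactOperator_weightedShift hb hlim
  have hA : IsUnit (1 + S) := hS.isUnit_one_add_of_injective (injective_one_add_weightedShift hb)
  refine ⟨?_, hB ▸ zero_notMem_closure_numericalRange_adjoint_mul_self hA, ?_⟩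
  · have hT : IsCompactOperator (weightedBackwardShift hb) :=
      isCompactOperator_weightedBackwardShift hb hlim
    have hdiff : B - ContinuousLinearMap.id ℂ ellTwo =
        S + weightedBackwardShift hb + weightedBackwardShift hb * S := by
      rw [hB, map_add, ← ContinuousLinearMap.star_eq_adjoint, star_one, adjoint_weightedShift,
        ← ContinuousLinearMap.one_def]
      noncomm_ring
    rw [hdiff]
    exact (hS.add hT).add (hS.clm_comp (weightedBackwardShift hb))
  · obtain ⟨u, hu⟩ : IsUnit B := hB ▸ hA.star.mul hA
    exact ⟨↑u⁻¹, hu ▸ u.inv_mul, hu ▸ u.mul_inv⟩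

/-- Let `B` be the bounded tridiagonal operator on `ℓ²` with positive off-diagonal entries
`bOff j = B (j+1) j = B j (j+1)` tending to `0` and diagonal entries `1 + bOff j ^ 2`.
Then `B` is a compact perturbation of the identity, `0` is not in the closure of the
numerical range `Θ(B)`, and in particular `B` is boundedly invertible. -/
theorem stmt_18 (B : ellTwo →L[ℂ] ellTwo) (bOff : ℕ → ℝ)
    (hpos : ∀ j, 0 < bOff j)
    (hlim : Tendsto bOff atTop (nhds 0))
    (hact : ∀ (y : ellTwo) (j : ℕ),
      (B y) j = (if j = 0 then 0 else (bOff (j - 1) : ℂ) * y (j - 1)) +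
        (1 + (bOff j : ℂ) ^ 2) * y j + (bOff j : ℂ) * y (j + 1)) :
    IsCompactOperator (⇑(B - ContinuousLinearMap.id ℂ ellTwo)) ∧
    (0 : ℂ) ∉ closure {w : ℂ | ∃ y : ellTwo, ‖y‖ = 1 ∧ w = (inner ℂ (B y) y : ℂ)} ∧
    ∃ Binv : ellTwo →L[ℂ] ellTwo,
      Binv.comp B = ContinuousLinearMap.id ℂ ellTwo ∧
      B.comp Binv = ContinuousLinearMap.id ℂ ellTwo :=
  stmt_18_general B bOff hlim hact
end
end
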